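/- arXiv:2301.06415 — 4 statements merged into one kernel-verified Lean document; each statement's English description precedes it below -/
import Mathlib

section
/- Let E ⊆ ℝ be a nonempty compact set and f, g : ℝ × E → ℝ continuous in the second variable. Then for every x ∈ ℝ and all real numbers p, q, u, | min_{A∈E} ( f⁺(x,A)·q + f⁻(x,A)·p + g(x,A) ) − min_{a∈E} ( f(x,a)·u + g(x,a) ) | ≤ ( sup_{a∈E} |f(x,a)| ) · max( |q − u| , |p − u| ). (That is, the upwind numerical flux is Lipschitz-consistent with the exact flux p(u) = min_{a∈E}(f(x,a)u + g(x,a)).) -/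
/-- Lipschitz-consistency of the upwind numerical flux with the exact flux. -/
theorem stmt_1 (E : Set ℝ) (hE : E.Nonempty) (hEc : IsCompact E)
    (f g : ℝ → ℝ → ℝ)
    (hf : ∀ x, ContinuousOn (f x) E) (hg : ∀ x, ContinuousOn (g x) E)
    (x p q u : ℝ) :
    |sInf ((fun A => max (f x A) 0 * q + min (f x A) 0 * p + g x A) '' E)
      - sInf ((fun a => f x a * u + g x a) '' E)|
      ≤ sSup ((fun a => |f x a|) '' E) * max |q - u| |p - u| := by
  set h1 : ℝ → ℝ := fun A => max (f x A) 0 * q + min (f x A) 0 * p + g x A with hh1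
  set h2 : ℝ → ℝ := fun a => f x a * u + g x a with hh2
  have hf' := hf x
  have hg' := hg x
  have hcont1 : ContinuousOn h1 E := by
    apply ContinuousOn.add
    apply ContinuousOn.add
    · exact (hf'.sup continuousOn_const).mul continuousOn_const
    · exact (hf'.inf continuousOn_const).mul continuousOn_const
    · exact hg'
  have hcont2 : ContinuousOn h2 E := (hf'.mul continuousOn_const).add hg'
  have hcontf : ContinuousOn (fun a => |f x a|) E := hf'.abs
  have hb1 : BddBelow (h1 '' E) := (hEc.image_of_continuousOn hcont1).bddBelow
  have hb2 : BddBelow (h2 '' E) := (hEc.image_of_continuousOn hcont2).bddBelow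
  have hbf : BddAbove ((fun a => |f x a|) '' E) :=
    (hEc.image_of_continuousOn hcontf).bddAbove
  set M := sSup ((fun a => |f x a|) '' E) with hM
  set c := M * max |q - u| |p - u| with hc
  have hMle : ∀ a ∈ E, |f x a| ≤ M := fun a ha =>
    le_csSup hbf (Set.mem_image_of_mem _ ha)
  have key : ∀ a ∈ E, |h1 a - h2 a| ≤ c := by
    intro a ha
    have hMa := hMle a ha
    have h1' : max |q - u| |p - u| ≥ |q - u| := le_max_left _ _
    have h2' : max |q - u| |p - u| ≥ |p - u| := le_max_right _ _
    rcases le_or_gt 0 (f x a) with hs | hs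
    · have hmax : max (f x a) 0 = f x a := max_eq_left hs
      have hmin : min (f x a) 0 = 0 := min_eq_right hs
      have : h1 a - h2 a = f x a * (q - u) := by
        simp only [hh1, hh2, hmax, hmin]; ring
      rw [this, abs_mul]
      calc |f x a| * |q - u| ≤ M * |q - u| := by
            apply mul_le_mul_of_nonneg_right hMa (abs_nonneg _)
        _ ≤ c := by
            apply mul_le_mul_of_nonneg_left h1'
            exact le_trans (abs_nonneg _) hMa
    · have hmax : max (f x a) 0 = 0 := max_eq_right hs.le
      have hmin : min (f x a) 0 = f x a := min_eq_left hs.le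
      have : h1 a - h2 a = f x a * (p - u) := by
        simp only [hh1, hh2, hmax, hmin]; ring
      rw [this, abs_mul]
      calc |f x a| * |p - u| ≤ M * |p - u| := by
            apply mul_le_mul_of_nonneg_right hMa (abs_nonneg _)
        _ ≤ c := by
            apply mul_le_mul_of_nonneg_left h2'
            exact le_trans (abs_nonneg _) hMa
  rw [abs_sub_le_iff]
  constructor
  · have h : sInf (h1 '' E) - c ≤ sInf (h2 '' E) := by
      apply le_csInf (hE.image _)
      rintro b ⟨a, ha, rfl⟩
      have : sInf (h1 '' E) ≤ h1 a := csInf_le hb1 (Set.mem_image_of_mem _ ha)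
      have hk := key a ha
      rw [abs_le] at hk
      linarith [hk.1, hk.2]
    linarith
  · have h : sInf (h2 '' E) - c ≤ sInf (h1 '' E) := by
      apply le_csInf (hE.image _)
      rintro b ⟨a, ha, rfl⟩
      have : sInf (h2 '' E) ≤ h2 a := csInf_le hb2 (Set.mem_image_of_mem _ ha)
      have hk := key a ha
      rw [abs_le] at hk
      linarith [hk.1, hk.2]
    linarith
end

section
/- Let E ⊆ ℝ be nonempty and compact, f, g : ℝ × E → ℝ continuous, and φ : ℝ × ℝ → ℝ twice continuously differentiable. Fix (x,t) ∈ ℝ × ℝ. Then for all sequences y_k → x, s_k → t, Δx_k → 0⁺, Δt_k → 0⁺, the quantity (1/Δt_k) · [ φ(y_k, s_k) − φ(y_k, s_k + Δt_k) − Δt_k · min_{A∈E} ( f⁺(y_k,A)·(φ(y_k+Δx_k, s_k+Δt_k) − φ(y_k, s_k+Δt_k))/Δx_k + f⁻(y_k,A)·(φ(y_k, s_k+Δt_k) − φ(y_k−Δx_k, s_k+Δt_k))/Δx_k + g(y_k,A) ) ] converges to −∂t φ(x,t) − min_{a∈E} ( f(x,a)·∂x φ(x,t) + g(x,a) ) as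 k → ∞. (Consistency of the upwind scheme with the HJB equation.) -/
/-!
The scheme equals `-(time quotient) - min_{a ∈ E} H(y, p⁺, p⁻, a)` with the upwind Hamiltonian
`H(y, p⁺, p⁻, a) = f⁺(y,a) p⁺ + f⁻(y,a) p⁻ + g(y,a)`, where `p⁺`, `p⁻` are the forward and
backward quotients in `x`; on the diagonal `p⁺ = p⁻ = p` this is `f(y,a) p + g(y,a)` because
`f = f⁺ + f⁻`. By the mean value theorem every difference quotient of `φ` is a partial derivative
at an intermediate point, so by continuity of `Dφ` it tends to the partial derivative at `(x, t)`.
Finally, a minimum over the compact set `E` of a jointly continuous function depends continuously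
on the parameters.
-/

open Filter Set Topology

theorem IsCompact.continuous_sInf_of_continuousOn {α β γ : Type*}
    [ConditionallyCompleteLinearOrder α] [TopologicalSpace α] [OrderTopology α]
    [TopologicalSpace β] [TopologicalSpace γ] {f : γ → β → α} {K : Set β} (hK : IsCompact K)
    (hf : ContinuousOn (fun q : γ × β => f q.1 q.2) (univ ×ˢ K)) :
    Continuous fun x => sInf (f x '' K) := by
  have : CompactSpace K := isCompact_iff_compactSpace.mp hK
  have hfK : Continuous fun q : γ × K => f q.1 q.2 :=
    hf.comp_continuous (continuous_fst.prodMk (continuous_subtype_val.comp continuous_snd))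
      fun q => ⟨trivial, q.2.2⟩
  refine (isCompact_univ.continuous_sInf (f := fun x (a : K) => f x a) hfK).congr fun x => ?_
  rw [image_univ, image_eq_range]

section PartialSlopes

variable {φ : ℝ → ℝ → ℝ} {ι : Type*} {l : Filter ι} {x t : ℝ} {a h c : ι → ℝ}

theorem hasDerivAt_fst_of_differentiable (hφ : Differentiable ℝ fun q : ℝ × ℝ => φ q.1 q.2)
    (y b : ℝ) :
    HasDerivAt (fun y' => φ y' b) (fderiv ℝ (fun q : ℝ × ℝ => φ q.1 q.2) (y, b) (1, 0)) y :=
  (hφ (y, b)).hasFDerivAt.comp_hasDerivAt (f := fun y' => (y', b)) y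
    ((hasDerivAt_id' y).prodMk (hasDerivAt_const y b))

theorem tendsto_slope_fst_of_contDiff (hφ : ContDiff ℝ 1 fun q : ℝ × ℝ => φ q.1 q.2)
    (ha : Tendsto a l (𝓝 x)) (hpos : ∀ k, 0 < h k) (hh : Tendsto h l (𝓝 0))
    (hc : Tendsto c l (𝓝 t)) :
    Tendsto (fun k => (φ (a k + h k) (c k) - φ (a k) (c k)) / h k) l
      (𝓝 (deriv (fun y => φ y t) x)) := by
  set D : ℝ × ℝ → ℝ := fun p => fderiv ℝ (fun q : ℝ × ℝ => φ q.1 q.2) p (1, 0)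
  have hdiff := hφ.differentiable one_ne_zero
  have hD : Continuous D := (hφ.continuous_fderiv one_ne_zero).clm_apply continuous_const
  have hmvt : ∀ k, ∃ ξ ∈ Ioo (a k) (a k + h k),
      D (ξ, c k) = (φ (a k + h k) (c k) - φ (a k) (c k)) / h k := by
    intro k
    have hlt : a k < a k + h k := lt_add_of_pos_right _ (hpos k)
    simpa only [add_sub_cancel_left] using exists_hasDerivAt_eq_slope _ _ hlt
      (fun y _ => (hasDerivAt_fst_of_differentiable hdiff y (c k)).continuousAt.continuousWithinAt)
      (fun y _ => hasDerivAt_fst_of_differentiable hdiff y (c k))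
  choose ξ hξ hξD using hmvt
  have hξ_lim : Tendsto ξ l (𝓝 x) := by
    have hah : Tendsto (fun k => a k + h k) l (𝓝 x) := by simpa using ha.add hh
    exact tendsto_of_tendsto_of_tendsto_of_le_of_le ha hah (fun k => (hξ k).1.le)
      (fun k => (hξ k).2.le)
  rw [(hasDerivAt_fst_of_differentiable hdiff x t).deriv]
  exact ((hD.tendsto (x, t)).comp (hξ_lim.prodMk_nhds hc)).congr hξD

theorem tendsto_slope_snd_of_contDiff (hφ : ContDiff ℝ 1 fun q : ℝ × ℝ => φ q.1 q.2)
    (ha : Tendsto a l (𝓝 t)) (hpos : ∀ k, 0 < h k) (hh : Tendsto h l (𝓝 0))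
    (hc : Tendsto c l (𝓝 x)) :
    Tendsto (fun k => (φ (c k) (a k + h k) - φ (c k) (a k)) / h k) l
      (𝓝 (deriv (fun s => φ x s) t)) :=
  tendsto_slope_fst_of_contDiff (φ := fun s y => φ y s)
    (hφ.comp (contDiff_snd.prodMk contDiff_fst)) ha hpos hh hc

end PartialSlopes

def upwindHamiltonian (f g : ℝ → ℝ → ℝ) (y p q a : ℝ) : ℝ :=
  max (f y a) 0 * p + min (f y a) 0 * q + g y a

theorem upwindHamiltonian_self (f g : ℝ → ℝ → ℝ) (y p : ℝ) :
    upwindHamiltonian f g y p p = fun a => f y a * p + g y a := by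
  funext a
  rw [upwindHamiltonian, ← add_mul, max_add_min, add_zero]

theorem continuousOn_upwindHamiltonian {f g : ℝ → ℝ → ℝ} {E : Set ℝ}
    (hf : ContinuousOn (fun q : ℝ × ℝ => f q.1 q.2) (univ ×ˢ E))
    (hg : ContinuousOn (fun q : ℝ × ℝ => g q.1 q.2) (univ ×ˢ E)) :
    ContinuousOn (fun r : (ℝ × ℝ × ℝ) × ℝ => upwindHamiltonian f g r.1.1 r.1.2.1 r.1.2.2 r.2)
      (univ ×ˢ E) := by
  have hmaps : MapsTo (fun r : (ℝ × ℝ × ℝ) × ℝ => (r.1.1, r.2)) (univ ×ˢ E) (univ ×ˢ E) :=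
    fun r hr => ⟨trivial, hr.2⟩
  have hproj : Continuous fun r : (ℝ × ℝ × ℝ) × ℝ => (r.1.1, r.2) := by fun_prop
  have hf' : ContinuousOn (fun r : (ℝ × ℝ × ℝ) × ℝ => f r.1.1 r.2) (univ ×ˢ E) :=
    hf.comp hproj.continuousOn hmaps
  have hg' : ContinuousOn (fun r : (ℝ × ℝ × ℝ) × ℝ => g r.1.1 r.2) (univ ×ˢ E) :=
    hg.comp hproj.continuousOn hmaps
  exact ((hf'.sup continuousOn_const).mul (by fun_prop)).add
    ((hf'.inf continuousOn_const).mul (by fun_prop)) |>.add hg'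

theorem stmt_4_general (E : Set ℝ) (hEc : IsCompact E)
    (f g : ℝ → ℝ → ℝ)
    (hf : ContinuousOn (fun q : ℝ × ℝ => f q.1 q.2) (Set.univ ×ˢ E))
    (hg : ContinuousOn (fun q : ℝ × ℝ => g q.1 q.2) (Set.univ ×ˢ E))
    (φ : ℝ → ℝ → ℝ) (hφ : ContDiff ℝ 2 (fun q : ℝ × ℝ => φ q.1 q.2))
    (x t : ℝ)
    (y s Δx Δt : ℕ → ℝ)
    (hy : Filter.Tendsto y Filter.atTop (nhds x))
    (hs : Filter.Tendsto s Filter.atTop (nhds t))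
    (hΔxpos : ∀ k, 0 < Δx k) (hΔtpos : ∀ k, 0 < Δt k)
    (hΔx : Filter.Tendsto Δx Filter.atTop (nhds 0))
    (hΔt : Filter.Tendsto Δt Filter.atTop (nhds 0)) :
    Filter.Tendsto
      (fun k => (1 / Δt k) *
        (φ (y k) (s k) - φ (y k) (s k + Δt k)
          - Δt k * sInf ((fun A =>
              max (f (y k) A) 0 *
                ((φ (y k + Δx k) (s k + Δt k) - φ (y k) (s k + Δt k)) / Δx k)
              + min (f (y k) A) 0 *
                ((φ (y k) (s k + Δt k) - φ (y k - Δx k) (s k + Δt k)) / Δx k)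
              + g (y k) A) '' E)))
      Filter.atTop
      (nhds (-(deriv (fun s' => φ x s') t)
        - sInf ((fun a => f x a * deriv (fun y' => φ y' t) x + g x a) '' E))) := by
  have hφ1 : ContDiff ℝ 1 fun q : ℝ × ℝ => φ q.1 q.2 := hφ.of_le (by norm_num)
  have hs' : Tendsto (fun k => s k + Δt k) atTop (𝓝 t) := by simpa using hs.add hΔt
  have hforward := tendsto_slope_fst_of_contDiff hφ1 hy hΔxpos hΔx hs'
  have hbackward := tendsto_slope_fst_of_contDiff hφ1 (by simpa using hy.sub hΔx) hΔxpos hΔx hs'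
  simp only [sub_add_cancel] at hbackward
  have htime := tendsto_slope_snd_of_contDiff hφ1 hs hΔtpos hΔt hy
  have hmin := ((hEc.continuous_sInf_of_continuousOn
    (f := fun r => upwindHamiltonian f g r.1 r.2.1 r.2.2)
    (continuousOn_upwindHamiltonian hf hg)).tendsto _).comp
      (hy.prodMk_nhds (hforward.prodMk_nhds hbackward))
  simp only [Function.comp_def, upwindHamiltonian_self] at hmin
  refine (htime.neg.sub hmin).congr fun k => ?_
  have hΔt0 : Δt k ≠ 0 := (hΔtpos k).ne'
  simp only [upwindHamiltonian]
  generalize sInf (_ : Set ℝ) = S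
  field_simp
  ring

/-- consistency of the upwind scheme with the HJB equation. -/
theorem stmt_4 (E : Set ℝ) (hE : E.Nonempty) (hEc : IsCompact E)
    (f g : ℝ → ℝ → ℝ)
    (hf : ContinuousOn (fun q : ℝ × ℝ => f q.1 q.2) (Set.univ ×ˢ E))
    (hg : ContinuousOn (fun q : ℝ × ℝ => g q.1 q.2) (Set.univ ×ˢ E))
    (φ : ℝ → ℝ → ℝ) (hφ : ContDiff ℝ 2 (fun q : ℝ × ℝ => φ q.1 q.2))
    (x t : ℝ)
    (y s Δx Δt : ℕ → ℝ)
    (hy : Filter.Tendsto y Filter.atTop (nhds x))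
    (hs : Filter.Tendsto s Filter.atTop (nhds t))
    (hΔxpos : ∀ k, 0 < Δx k) (hΔtpos : ∀ k, 0 < Δt k)
    (hΔx : Filter.Tendsto Δx Filter.atTop (nhds 0))
    (hΔt : Filter.Tendsto Δt Filter.atTop (nhds 0)) :
    Filter.Tendsto
      (fun k => (1 / Δt k) *
        (φ (y k) (s k) - φ (y k) (s k + Δt k)
          - Δt k * sInf ((fun A =>
              max (f (y k) A) 0 *
                ((φ (y k + Δx k) (s k + Δt k) - φ (y k) (s k + Δt k)) / Δx k)
              + min (f (y k) A) 0 *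
                ((φ (y k) (s k + Δt k) - φ (y k - Δx k) (s k + Δt k)) / Δx k)
              + g (y k) A) '' E)))
      Filter.atTop
      (nhds (-(deriv (fun s' => φ x s') t)
        - sInf ((fun a => f x a * deriv (fun y' => φ y' t) x + g x a) '' E))) :=
  stmt_4_general E hEc f g hf hg φ hφ x t y s Δx Δt hy hs hΔxpos hΔtpos hΔx hΔt
end

section
/- Fix T > 0, a nonempty compact set E ⊆ ℝ, continuous f, g : ℝ × E → ℝ, mesh numbers N_x, N_t ≥ 1, Δx = 1/N_x, Δt = T/N_t, α = Δt/Δx, grid points x_i = i·Δx, and f⁺ = max(f,0), f⁻ = min(f,0). Define, for 2N_x-periodic W : ℤ → ℝ, the upwind scheme operator F[W](i) = W_i + Δt · min_{A∈E} ( f⁺(x_i,A)·(W_{i+1} − W_i)/Δx + f⁻(x_i,A)·(W_i − W_{i−1})/Δx + g(x_i,A) ). Assume the CFL condition α · sup_{x∈[−1,1], a∈E} |f(x,a)| < 1. Then F is nonexpansive in the sup norm: for all 2N_x-periodic V, W : ℤ → ℝ, max_i |F[V](i) − F[W](i)| ≤ max_i |V_i − W_i|. Consequently, if V_{i,j} and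 V̂_{i,j} both evolve backward in time by the scheme V_{i,j−1} = F[V_{·,j}](i) from terminal data V_{·,N_t} and V̂_{·,N_t}, then the error e_{i,j} = V_{i,j} − V̂_{i,j} satisfies max_i |e_{i,j−1}| ≤ max_i |e_{i,j}| for every j ∈ {1,…,N_t}. (Stability of the upwind scheme against perturbation of the terminal value.) -/
/-!
Under the CFL condition the upwind update with a frozen control `A` is a convex combination
`(1 - α|c|) W_i + α c⁺ W_{i+1} - α c⁻ W_{i-1}` of neighbouring values, `c = f(x_i, A)`, hence
monotone and nonexpansive. Taking for `A` a minimiser of the Hamiltonian of `W`, which exists by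
compactness of `E`, bounds `F[V](i) - F[W](i)` by the same combination of `V - W`, hence by
`max |V - W|`; by periodicity this maximum may be taken over one period.
-/

open Finset

noncomputable def upwindScheme (f g : ℝ → ℝ → ℝ) (E : Set ℝ) (Δx Δt : ℝ)
    (W : ℤ → ℝ) (i : ℤ) : ℝ :=
  W i + Δt * sInf ((fun A =>
    max (f ((i : ℝ) * Δx) A) 0 * ((W (i+1) - W i) / Δx)
    + min (f ((i : ℝ) * Δx) A) 0 * ((W i - W (i-1)) / Δx)
    + g ((i : ℝ) * Δx) A) '' E)

lemma upwind_step_le {α c M dm d0 dp : ℝ} (hα : 0 ≤ α) (hcfl : α * |c| ≤ 1)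
    (hm : dm ≤ M) (h0 : d0 ≤ M) (hp : dp ≤ M) :
    d0 + α * (max c 0 * (dp - d0) + min c 0 * (d0 - dm)) ≤ M := by
  rcases le_total 0 c with hc | hc
  · rw [max_eq_left hc, min_eq_right hc]
    rw [abs_of_nonneg hc] at hcfl
    nlinarith [mul_nonneg hα hc]
  · rw [max_eq_right hc, min_eq_left hc]
    rw [abs_of_nonpos hc] at hcfl
    nlinarith [mul_nonneg hα (neg_nonneg.mpr hc)]

lemma IsCompact.exists_sInf_image_sub_le {X : Type*} [TopologicalSpace X] {E : Set X}
    (hEc : IsCompact E) (hE : E.Nonempty) {φ ψ : X → ℝ} (hφ : BddBelow (φ '' E))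
    (hψ : ContinuousOn ψ E) :
    ∃ a ∈ E, sInf (φ '' E) - sInf (ψ '' E) ≤ φ a - ψ a := by
  obtain ⟨a, ha, hψa⟩ := (hEc.image_of_continuousOn hψ).sInf_mem (hE.image ψ)
  exact ⟨a, ha, by rw [← hψa]; linarith [csInf_le hφ ⟨a, ha, rfl⟩]⟩

lemma Function.Periodic.le_sup'_Icc {α : Type*} [SemilatticeSup α] {u : ℤ → α} {N : ℤ}
    (hu : Function.Periodic u (2 * N)) (hN : 0 < N) (hne : (Icc (-N) N).Nonempty) (k : ℤ) :
    u k ≤ (Icc (-N) N).sup' hne u := by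
  obtain ⟨r, ⟨hr₁, hr₂⟩, hkr⟩ := hu.exists_mem_Ico (by omega) k (-N)
  exact hkr ▸ le_sup' u (mem_Icc.mpr ⟨hr₁, by omega⟩)

section Upwind

variable {f g : ℝ → ℝ → ℝ} {E : Set ℝ} {Δx Δt : ℝ}

lemma upwindScheme_sub_le (hEc : IsCompact E) (hE : E.Nonempty)
    (hf : ∀ x, ContinuousOn (f x) E) (hg : ∀ x, ContinuousOn (g x) E)
    (hΔx : 0 ≤ Δx) (hΔt : 0 ≤ Δt) {i : ℤ}
    (hcfl : ∀ A ∈ E, Δt / Δx * |f ((i : ℝ) * Δx) A| ≤ 1)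
    {P Q : ℤ → ℝ} {M : ℝ} (hPQ : ∀ k, P k - Q k ≤ M) :
    upwindScheme f g E Δx Δt P i - upwindScheme f g E Δx Δt Q i ≤ M := by
  set x : ℝ := (i : ℝ) * Δx
  have hH : ∀ W : ℤ → ℝ, ContinuousOn (fun A => max (f x A) 0 * ((W (i+1) - W i) / Δx)
      + min (f x A) 0 * ((W i - W (i-1)) / Δx) + g x A) E := fun W =>
    ((((hf x).sup continuousOn_const).mul continuousOn_const).add
      (((hf x).inf continuousOn_const).mul continuousOn_const)).add (hg x)
  obtain ⟨a, ha, hinf⟩ := hEc.exists_sInf_image_sub_le hE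
    (hEc.image_of_continuousOn (hH P)).bddBelow (hH Q)
  set c := f x a
  calc upwindScheme f g E Δx Δt P i - upwindScheme f g E Δx Δt Q i
      ≤ (P i - Q i) + Δt * ((max c 0 * ((P (i+1) - P i) / Δx)
          + min c 0 * ((P i - P (i-1)) / Δx) + g x a)
        - (max c 0 * ((Q (i+1) - Q i) / Δx) + min c 0 * ((Q i - Q (i-1)) / Δx) + g x a)) := by
        unfold upwindScheme
        linarith [mul_le_mul_of_nonneg_left hinf hΔt]
    _ = (P i - Q i) + Δt / Δx * (max c 0 * ((P (i+1) - Q (i+1)) - (P i - Q i))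
          + min c 0 * ((P i - Q i) - (P (i-1) - Q (i-1)))) := by ring
    _ ≤ M := upwind_step_le (div_nonneg hΔt hΔx) (hcfl a ha) (hPQ _) (hPQ _) (hPQ _)

lemma upwindScheme_nonexpansive (hEc : IsCompact E) (hE : E.Nonempty)
    (hf : ∀ x, ContinuousOn (f x) E) (hg : ∀ x, ContinuousOn (g x) E)
    (hΔx : 0 ≤ Δx) (hΔt : 0 ≤ Δt) {N : ℤ} (hN : 0 < N) (hne : (Icc (-N) N).Nonempty)
    (hcfl : ∀ i ∈ Icc (-N) N, ∀ A ∈ E, Δt / Δx * |f ((i : ℝ) * Δx) A| ≤ 1)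
    {V W : ℤ → ℝ} (hV : Function.Periodic V (2 * N)) (hW : Function.Periodic W (2 * N)) :
    (Icc (-N) N).sup' hne (fun i => |upwindScheme f g E Δx Δt V i - upwindScheme f g E Δx Δt W i|)
      ≤ (Icc (-N) N).sup' hne (fun i => |V i - W i|) := by
  have hbound : ∀ k, |V k - W k| ≤ (Icc (-N) N).sup' hne (fun i => |V i - W i|) :=
    ((hV.sub hW).comp abs).le_sup'_Icc hN hne
  refine sup'_le _ _ fun i hi => abs_sub_le_iff.mpr ⟨?_, ?_⟩
  · exact upwindScheme_sub_le hEc hE hf hg hΔx hΔt (hcfl i hi)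
      fun k => (le_abs_self _).trans (hbound k)
  · exact upwindScheme_sub_le hEc hE hf hg hΔx hΔt (hcfl i hi)
      fun k => (le_abs_self _).trans (abs_sub_comm (V k) (W k) ▸ hbound k)

end Upwind

lemma int_mul_one_div_mem_Icc {N : ℕ} {i : ℤ} (hN : 1 ≤ N) (hi : i ∈ Icc (-(N : ℤ)) N) :
    (i : ℝ) * (1 / N) ∈ Set.Icc (-1 : ℝ) 1 := by
  obtain ⟨hi₁, hi₂⟩ := mem_Icc.mp hi
  have hN' : (0 : ℝ) < N := by exact_mod_cast hN
  rw [mul_one_div, Set.mem_Icc, le_div_iff₀ hN', div_le_one hN']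
  exact ⟨by exact_mod_cast (by omega : -1 * (N : ℤ) ≤ i), by exact_mod_cast hi₂⟩

theorem stmt_5_general (T : ℝ) (hT : 0 < T)
    (E : Set ℝ) (hE : E.Nonempty) (hEc : IsCompact E)
    (f g : ℝ → ℝ → ℝ)
    (hf : ContinuousOn (fun q : ℝ × ℝ => f q.1 q.2) (Set.univ ×ˢ E))
    (hg : ContinuousOn (fun q : ℝ × ℝ => g q.1 q.2) (Set.univ ×ˢ E))
    (Nx Nt : ℕ) (hNx : 1 ≤ Nx)
    (Δx Δt α : ℝ) (hΔx : Δx = 1 / (Nx : ℝ)) (hΔt : Δt = T / (Nt : ℝ)) (hα : α = Δt / Δx)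
    (F : (ℤ → ℝ) → ℤ → ℝ)
    (hF : ∀ (W : ℤ → ℝ) (i : ℤ),
      F W i = W i + Δt * sInf ((fun A =>
        max (f ((i : ℝ) * Δx) A) 0 * ((W (i+1) - W i) / Δx)
        + min (f ((i : ℝ) * Δx) A) 0 * ((W i - W (i-1)) / Δx)
        + g ((i : ℝ) * Δx) A) '' E))
    (hCFL : α * sSup ((fun q : ℝ × ℝ => |f q.1 q.2|) '' (Set.Icc (-1:ℝ) 1 ×ˢ E)) < 1)
    (hne : (Finset.Icc (-(Nx : ℤ)) (Nx : ℤ)).Nonempty) :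
    (∀ V W : ℤ → ℝ,
      (∀ i : ℤ, V (i + 2 * (Nx : ℤ)) = V i) →
      (∀ i : ℤ, W (i + 2 * (Nx : ℤ)) = W i) →
      (Finset.Icc (-(Nx : ℤ)) (Nx : ℤ)).sup' hne (fun i => |F V i - F W i|)
        ≤ (Finset.Icc (-(Nx : ℤ)) (Nx : ℤ)).sup' hne (fun i => |V i - W i|)) ∧
    (∀ V Vhat : ℤ → ℕ → ℝ,
      (∀ (i : ℤ) (j : ℕ), V (i + 2 * (Nx : ℤ)) j = V i j) →
      (∀ (i : ℤ) (j : ℕ), Vhat (i + 2 * (Nx : ℤ)) j = Vhat i j) →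
      (∀ (i : ℤ) (j : ℕ), 1 ≤ j → j ≤ Nt → V i (j - 1) = F (fun z => V z j) i) →
      (∀ (i : ℤ) (j : ℕ), 1 ≤ j → j ≤ Nt → Vhat i (j - 1) = F (fun z => Vhat z j) i) →
      ∀ j : ℕ, 1 ≤ j → j ≤ Nt →
        (Finset.Icc (-(Nx : ℤ)) (Nx : ℤ)).sup' hne (fun i => |V i (j-1) - Vhat i (j-1)|)
          ≤ (Finset.Icc (-(Nx : ℤ)) (Nx : ℤ)).sup' hne (fun i => |V i j - Vhat i j|)) := by
  subst hα
  obtain rfl : F = upwindScheme f g E Δx Δt := funext fun W => funext (hF W)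
  have hΔx₀ : 0 ≤ Δx := by rw [hΔx]; positivity
  have hΔt₀ : 0 ≤ Δt := by rw [hΔt]; positivity
  have hfbdd : BddAbove ((fun q : ℝ × ℝ => |f q.1 q.2|) '' (Set.Icc (-1:ℝ) 1 ×ˢ E)) :=
    ((isCompact_Icc.prod hEc).image_of_continuousOn
      (hf.mono (Set.prod_mono (Set.subset_univ _) subset_rfl)).abs).bddAbove
  have hcfl : ∀ i ∈ Icc (-(Nx : ℤ)) Nx, ∀ A ∈ E, Δt / Δx * |f ((i : ℝ) * Δx) A| ≤ 1 :=
    fun i hi A hA => (mul_le_mul_of_nonneg_left (le_csSup hfbdd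
      ⟨(_, A), ⟨hΔx ▸ int_mul_one_div_mem_Icc hNx hi, hA⟩, rfl⟩) (div_nonneg hΔt₀ hΔx₀)).trans
        hCFL.le
  have hnonexp := fun V W => upwindScheme_nonexpansive (V := V) (W := W) hEc hE
    (fun x => hf.uncurry_left x (Set.mem_univ x)) (fun x => hg.uncurry_left x (Set.mem_univ x))
    hΔx₀ hΔt₀ (by omega) hne hcfl
  refine ⟨hnonexp, fun V Vhat hV hVhat hVstep hVhatstep j hj₁ hj₂ => ?_⟩
  simp only [hVstep _ j hj₁ hj₂, hVhatstep _ j hj₁ hj₂]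
  exact hnonexp _ _ (fun i => hV i j) (fun i => hVhat i j)

/-- the upwind scheme operator is nonexpansive in the sup norm under CFL,
and the backward-in-time scheme is stable against perturbations of the terminal value. -/
theorem stmt_5 (T : ℝ) (hT : 0 < T)
    (E : Set ℝ) (hE : E.Nonempty) (hEc : IsCompact E)
    (f g : ℝ → ℝ → ℝ)
    (hf : ContinuousOn (fun q : ℝ × ℝ => f q.1 q.2) (Set.univ ×ˢ E))
    (hg : ContinuousOn (fun q : ℝ × ℝ => g q.1 q.2) (Set.univ ×ˢ E))
    (Nx Nt : ℕ) (hNx : 1 ≤ Nx) (hNt : 1 ≤ Nt)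
    (Δx Δt α : ℝ) (hΔx : Δx = 1 / (Nx : ℝ)) (hΔt : Δt = T / (Nt : ℝ)) (hα : α = Δt / Δx)
    (F : (ℤ → ℝ) → ℤ → ℝ)
    (hF : ∀ (W : ℤ → ℝ) (i : ℤ),
      F W i = W i + Δt * sInf ((fun A =>
        max (f ((i : ℝ) * Δx) A) 0 * ((W (i+1) - W i) / Δx)
        + min (f ((i : ℝ) * Δx) A) 0 * ((W i - W (i-1)) / Δx)
        + g ((i : ℝ) * Δx) A) '' E))
    (hCFL : α * sSup ((fun q : ℝ × ℝ => |f q.1 q.2|) '' (Set.Icc (-1:ℝ) 1 ×ˢ E)) < 1)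
    (hne : (Finset.Icc (-(Nx : ℤ)) (Nx : ℤ)).Nonempty) :
    (∀ V W : ℤ → ℝ,
      (∀ i : ℤ, V (i + 2 * (Nx : ℤ)) = V i) →
      (∀ i : ℤ, W (i + 2 * (Nx : ℤ)) = W i) →
      (Finset.Icc (-(Nx : ℤ)) (Nx : ℤ)).sup' hne (fun i => |F V i - F W i|)
        ≤ (Finset.Icc (-(Nx : ℤ)) (Nx : ℤ)).sup' hne (fun i => |V i - W i|)) ∧
    (∀ V Vhat : ℤ → ℕ → ℝ,
      (∀ (i : ℤ) (j : ℕ), V (i + 2 * (Nx : ℤ)) j = V i j) →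
      (∀ (i : ℤ) (j : ℕ), Vhat (i + 2 * (Nx : ℤ)) j = Vhat i j) →
      (∀ (i : ℤ) (j : ℕ), 1 ≤ j → j ≤ Nt → V i (j - 1) = F (fun z => V z j) i) →
      (∀ (i : ℤ) (j : ℕ), 1 ≤ j → j ≤ Nt → Vhat i (j - 1) = F (fun z => Vhat z j) i) →
      ∀ j : ℕ, 1 ≤ j → j ≤ Nt →
        (Finset.Icc (-(Nx : ℤ)) (Nx : ℤ)).sup' hne (fun i => |V i (j-1) - Vhat i (j-1)|)
          ≤ (Finset.Icc (-(Nx : ℤ)) (Nx : ℤ)).sup' hne (fun i => |V i j - Vhat i j|)) :=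
  stmt_5_general T hT E hE hEc f g hf hg Nx Nt hNx Δx Δt α hΔx hΔt hα F hF hCFL hne
end

section
/- Fix T > 0, a nonempty compact set E ⊆ ℝ, continuous f, g : ℝ × E → ℝ, mesh numbers N_x, N_t ≥ 1, Δx = 1/N_x, Δt = T/N_t, α = Δt/Δx, grid points x_i = i·Δx, and f⁺ = max(f,0), f⁻ = min(f,0). Define, for 2N_x-periodic W : ℤ → ℝ, the upwind scheme operator F[W](i) = W_i + Δt · min_{A∈E} ( f⁺(x_i,A)·(W_{i+1} − W_i)/Δx + f⁻(x_i,A)·(W_i − W_{i−1})/Δx + g(x_i,A) ). Assume the CFL condition α · sup_{x∈[−1,1], a∈E} |f(x,a)| < 1. If V_{i,j} and W_{i,j} both evolve backward in time by V_{i,j−1} = F[V_{·,j}](i) and W_{i,j−1} = F[W_{·,j}](i), then the one-sided comparison principle holds: max_{i, 0 ≤ j ≤ N_t} ( V_{i,j} − W_{i,j} ) ≤ max_i ( V_{i,N_t} − W_{i,N_t} ). -/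
set_option maxHeartbeats 1000000


/-- one-sided comparison principle for the backward-in-time upwind scheme. -/
theorem stmt_6 (T : ℝ) (hT : 0 < T)
    (E : Set ℝ) (hE : E.Nonempty) (hEc : IsCompact E)
    (f g : ℝ → ℝ → ℝ)
    (hf : ContinuousOn (fun q : ℝ × ℝ => f q.1 q.2) (Set.univ ×ˢ E))
    (hg : ContinuousOn (fun q : ℝ × ℝ => g q.1 q.2) (Set.univ ×ˢ E))
    (Nx Nt : ℕ) (hNx : 1 ≤ Nx) (hNt : 1 ≤ Nt)
    (Δx Δt α : ℝ) (hΔx : Δx = 1 / (Nx : ℝ)) (hΔt : Δt = T / (Nt : ℝ)) (hα : α = Δt / Δx)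
    (F : (ℤ → ℝ) → ℤ → ℝ)
    (hF : ∀ (U : ℤ → ℝ) (i : ℤ),
      F U i = U i + Δt * sInf ((fun A =>
        max (f ((i : ℝ) * Δx) A) 0 * ((U (i+1) - U i) / Δx)
        + min (f ((i : ℝ) * Δx) A) 0 * ((U i - U (i-1)) / Δx)
        + g ((i : ℝ) * Δx) A) '' E))
    (hCFL : α * sSup ((fun q : ℝ × ℝ => |f q.1 q.2|) '' (Set.Icc (-1:ℝ) 1 ×ˢ E)) < 1)
    (hne : (Finset.Icc (-(Nx : ℤ)) (Nx : ℤ)).Nonempty)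
    (V W : ℤ → ℕ → ℝ)
    (hVper : ∀ (i : ℤ) (j : ℕ), V (i + 2 * (Nx : ℤ)) j = V i j)
    (hWper : ∀ (i : ℤ) (j : ℕ), W (i + 2 * (Nx : ℤ)) j = W i j)
    (hVstep : ∀ (i : ℤ) (j : ℕ), 1 ≤ j → j ≤ Nt → V i (j - 1) = F (fun z => V z j) i)
    (hWstep : ∀ (i : ℤ) (j : ℕ), 1 ≤ j → j ≤ Nt → W i (j - 1) = F (fun z => W z j) i) :
    ∀ (i : ℤ), i ∈ Finset.Icc (-(Nx : ℤ)) (Nx : ℤ) → ∀ j : ℕ, j ≤ Nt →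
      V i j - W i j
        ≤ (Finset.Icc (-(Nx : ℤ)) (Nx : ℤ)).sup' hne (fun z => V z Nt - W z Nt) := by
  have hNx0 : (0:ℝ) < (Nx:ℝ) := by exact_mod_cast Nat.lt_of_lt_of_le Nat.zero_lt_one hNx
  have hΔx0 : 0 < Δx := by rw [hΔx]; positivity
  have hNt0 : (0:ℝ) < (Nt:ℝ) := by exact_mod_cast Nat.lt_of_lt_of_le Nat.zero_lt_one hNt
  have hΔt0 : 0 < Δt := by rw [hΔt]; positivity
  have hα0 : 0 < α := by rw [hα]; positivity
  have hNxZ : (1:ℤ) ≤ (Nx:ℤ) := by exact_mod_cast hNx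
  set I := Finset.Icc (-(Nx : ℤ)) (Nx : ℤ) with hIdef
  set M := I.sup' hne (fun z => V z Nt - W z Nt) with hMdef
  set S := sSup ((fun q : ℝ × ℝ => |f q.1 q.2|) '' (Set.Icc (-1:ℝ) 1 ×ˢ E)) with hSdef
  have hfabs : ContinuousOn (fun q : ℝ × ℝ => |f q.1 q.2|) (Set.Icc (-1:ℝ) 1 ×ˢ E) :=
    continuous_abs.comp_continuousOn
      (hf.mono (Set.prod_mono (Set.subset_univ _) le_rfl))
  have hSbd : BddAbove ((fun q : ℝ × ℝ => |f q.1 q.2|) '' (Set.Icc (-1:ℝ) 1 ×ˢ E)) :=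
    ((isCompact_Icc.prod hEc).image_of_continuousOn hfabs).bddAbove
  have hfS : ∀ x ∈ Set.Icc (-1:ℝ) 1, ∀ A ∈ E, |f x A| ≤ S := fun x hx A hA =>
    le_csSup hSbd ⟨(x,A), ⟨hx,hA⟩, rfl⟩
  have hNxΔx : (Nx:ℝ) * Δx = 1 := by rw [hΔx]; field_simp
  have hΔtαΔx : Δt = α * Δx := by rw [hα]; field_simp
  -- key single-step estimate
  have key : ∀ (jj : ℕ), 1 ≤ jj → jj ≤ Nt →
      (∀ z ∈ I, V z jj - W z jj ≤ M) → ∀ i ∈ I, V i (jj-1) - W i (jj-1) ≤ M := by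
    intro jj hjj1 hjjNt hD i hiI
    have hDnb : ∀ z : ℤ, -(Nx:ℤ) - 1 ≤ z → z ≤ (Nx:ℤ) + 1 → V z jj - W z jj ≤ M := by
      intro z hz1 hz2
      by_cases hzI : z ∈ I
      · exact hD z hzI
      · simp only [hIdef, Finset.mem_Icc, not_and_or, not_le] at hzI
        rcases hzI with h | h
        · -- z = -Nx - 1 ; shift up by 2Nx
          have hz : z = -(Nx:ℤ) - 1 := by omega
          have hV := hVper z jj
          have hW := hWper z jj
          have hmem : z + 2*(Nx:ℤ) ∈ I := by
            simp only [hIdef, Finset.mem_Icc]; omega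
          have := hD (z + 2*(Nx:ℤ)) hmem
          rw [hV, hW] at this
          exact this
        · -- z = Nx + 1 ; shift down by 2Nx
          have hz : z = (Nx:ℤ) + 1 := by omega
          have hV := hVper (z - 2*(Nx:ℤ)) jj
          have hW := hWper (z - 2*(Nx:ℤ)) jj
          have harith : z - 2*(Nx:ℤ) + 2*(Nx:ℤ) = z := by ring
          rw [harith] at hV hW
          have hmem : z - 2*(Nx:ℤ) ∈ I := by
            simp only [hIdef, Finset.mem_Icc]; omega
          have := hD (z - 2*(Nx:ℤ)) hmem
          rw [hV, hW]
          exact this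
    have hiIcc : -(Nx:ℤ) ≤ i ∧ i ≤ (Nx:ℤ) := by
      simpa only [hIdef, Finset.mem_Icc] using hiI
    have hiR : -(Nx:ℝ) ≤ (i:ℝ) ∧ (i:ℝ) ≤ (Nx:ℝ) :=
      ⟨by exact_mod_cast hiIcc.1, by exact_mod_cast hiIcc.2⟩
    have hxIcc : (i:ℝ) * Δx ∈ Set.Icc (-1:ℝ) 1 := by
      constructor
      · nlinarith [hiR.1, hΔx0.le, hNxΔx]
      · nlinarith [hiR.2, hΔx0.le, hNxΔx]
    -- continuity in A at fixed x
    have hfx : ContinuousOn (fun A => f ((i:ℝ)*Δx) A) E := by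
      have : ContinuousOn ((fun q : ℝ × ℝ => f q.1 q.2) ∘ (fun A : ℝ => (((i:ℝ)*Δx), A))) E :=
        hf.comp (continuous_const.prodMk continuous_id).continuousOn
          (fun A hA => ⟨Set.mem_univ _, hA⟩)
      exact this
    have hgx : ContinuousOn (fun A => g ((i:ℝ)*Δx) A) E := by
      have : ContinuousOn ((fun q : ℝ × ℝ => g q.1 q.2) ∘ (fun A : ℝ => (((i:ℝ)*Δx), A))) E :=
        hg.comp (continuous_const.prodMk continuous_id).continuousOn
          (fun A hA => ⟨Set.mem_univ _, hA⟩)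
      exact this
    set φV : ℝ → ℝ := fun A =>
      max (f ((i:ℝ)*Δx) A) 0 * ((V (i+1) jj - V i jj) / Δx)
      + min (f ((i:ℝ)*Δx) A) 0 * ((V i jj - V (i-1) jj) / Δx)
      + g ((i:ℝ)*Δx) A with hφV
    set φW : ℝ → ℝ := fun A =>
      max (f ((i:ℝ)*Δx) A) 0 * ((W (i+1) jj - W i jj) / Δx)
      + min (f ((i:ℝ)*Δx) A) 0 * ((W i jj - W (i-1) jj) / Δx)
      + g ((i:ℝ)*Δx) A with hφW
    have hmaxc : ContinuousOn (fun A => max (f ((i:ℝ)*Δx) A) 0) E :=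
      (continuous_max.comp (continuous_id.prodMk continuous_const)).comp_continuousOn hfx
    have hminc : ContinuousOn (fun A => min (f ((i:ℝ)*Δx) A) 0) E :=
      (continuous_min.comp (continuous_id.prodMk continuous_const)).comp_continuousOn hfx
    have hcφV : ContinuousOn φV E :=
      ((hmaxc.mul continuousOn_const).add (hminc.mul continuousOn_const)).add hgx
    have hcφW : ContinuousOn φW E :=
      ((hmaxc.mul continuousOn_const).add (hminc.mul continuousOn_const)).add hgx
    obtain ⟨A, hAE, hAmin⟩ := hEc.exists_isMinOn hE hcφW
    have hWinf : sInf (φW '' E) = φW A :=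
      IsLeast.csInf_eq ⟨⟨A, hAE, rfl⟩, by rintro _ ⟨a, ha, rfl⟩; exact hAmin ha⟩
    have hVinf : sInf (φV '' E) ≤ φV A :=
      csInf_le (hEc.image_of_continuousOn hcφV).bddBelow ⟨A, hAE, rfl⟩
    have hVF : V i (jj-1) = V i jj + Δt * sInf (φV '' E) := by
      rw [hVstep i jj hjj1 hjjNt, hF]
    have hWF : W i (jj-1) = W i jj + Δt * sInf (φW '' E) := by
      rw [hWstep i jj hjj1 hjjNt, hF]
    set b := f ((i:ℝ)*Δx) A with hb
    set p := max b 0 with hp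
    set m := min b 0 with hm
    have hp0 : 0 ≤ p := le_max_right _ _
    have hm0 : m ≤ 0 := min_le_right _ _
    have hpm : p - m = |b| := by
      have := max_sub_min_eq_abs b 0
      simpa [hp, hm, abs_sub_comm] using this
    have hbS : |b| ≤ S := hfS _ hxIcc A hAE
    have hαb : α * |b| < 1 := by
      calc α * |b| ≤ α * S := by nlinarith
        _ < 1 := hCFL
    set D0 := V i jj - W i jj with hD0def
    set D1 := V (i+1) jj - W (i+1) jj with hD1def
    set Dm1 := V (i-1) jj - W (i-1) jj with hDm1def
    have hD0 : D0 ≤ M := hD i hiI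
    have hD1 : D1 ≤ M := hDnb (i+1) (by omega) (by omega)
    have hDm1 : Dm1 ≤ M := hDnb (i-1) (by omega) (by omega)
    have hdiff : φV A - φW A = p * ((D1 - D0)/Δx) + m * ((D0 - Dm1)/Δx) := by
      simp only [hφV, hφW, hD0def, hD1def, hDm1def, hp, hm, hb]
      ring
    have hstep : V i (jj-1) - W i (jj-1) ≤ D0 + Δt * (φV A - φW A) := by
      rw [hVF, hWF, hWinf]
      have : Δt * sInf (φV '' E) ≤ Δt * φV A :=
        mul_le_mul_of_nonneg_left hVinf hΔt0.le
      simp only [hD0def]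
      linarith
    rw [hdiff] at hstep
    have hΔxne : Δx ≠ 0 := ne_of_gt hΔx0
    have hexpand : D0 + Δt * (p * ((D1 - D0)/Δx) + m * ((D0 - Dm1)/Δx))
        = (1 - α*p + α*m) * D0 + (α*p) * D1 + (-(α*m)) * Dm1 := by
      rw [hΔtαΔx]; field_simp; ring
    rw [hexpand] at hstep
    have hc0 : 0 ≤ 1 - α*p + α*m := by nlinarith
    have hc1 : 0 ≤ α*p := by positivity
    have hc2 : 0 ≤ -(α*m) := by nlinarith
    calc V i (jj-1) - W i (jj-1)
        ≤ (1 - α*p + α*m) * D0 + (α*p) * D1 + (-(α*m)) * Dm1 := hstep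
      _ ≤ (1 - α*p + α*m) * M + (α*p) * M + (-(α*m)) * M := by
          gcongr <;> assumption
      _ = M := by ring
  -- downward induction
  have main : ∀ k : ℕ, k ≤ Nt → ∀ i ∈ I, V i (Nt - k) - W i (Nt - k) ≤ M := by
    intro k
    induction k with
    | zero =>
      intro _ i hi
      rw [Nat.sub_zero]
      exact Finset.le_sup' (fun z => V z Nt - W z Nt) hi
    | succ k ih =>
      intro hk i hi
      have h3 : Nt - (k+1) = (Nt - k) - 1 := by omega
      rw [h3]
      exact key (Nt - k) (by omega) (by omega) (ih (by omega)) i hi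
  intro i hi j hj
  have := main (Nt - j) (by omega) i hi
  rwa [Nat.sub_sub_self hj] at this
end
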